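/- Let h(x) := −4e^x(e^{2x}+3) / ((e^x−1)(e^x+3)((2e^x+e^{2x}−3)log((e^x−1)/(e^x+3)) − 4e^x x)). Then there exist constants c, c' > 0 and M > 0 such that c ≤ h(x)·x ≤ c' for all x > M. Consequently ∫_M^∞ √(h(x)) dx = ∞. -/

import Mathlib

open Real MeasureTheory

noncomputable def h8 (x : ℝ) : ℝ :=
  -4 * exp x * (exp (2 * x) + 3) /
    ((exp x - 1) * (exp x + 3) *
      ((2 * exp x + exp (2 * x) - 3) * Real.log ((exp x - 1) / (exp x + 3)) - 4 * exp x * x))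

/-!
Put `t = eˣ` and `L = log ((t + 3) / (t - 1))`. Since `2eˣ + e²ˣ - 3 = (t - 1)(t + 3)`,
`h8 x = 4t(t² + 3) / ((t - 1)(t + 3)(4tx + (t - 1)(t + 3)L))`, and `0 ≤ (t - 1)L ≤ 4` by
`log u ≤ u - 1`. So the logarithmic term is `O(t)` against `4tx`, and `h8 x · x` tends to `1`.
In particular `h8 x ≥ 1/(4x) ≥ 1/x²` for large `x`, so `√(h8 x) ≥ 1/x`, which is not integrable
at infinity.
-/

lemma mul_log_div_le_sub {a b : ℝ} (ha : 0 < a) (hab : a ≤ b) : a * log (b / a) ≤ b - a := by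
  calc a * log (b / a) ≤ a * (b / a - 1) :=
        mul_le_mul_of_nonneg_left (log_le_sub_one_of_pos (div_pos (ha.trans_le hab) ha)) ha.le
    _ = b - a := by field_simp

lemma lintegral_Ioi_ofReal_inv_eq_top (a : ℝ) : ∫⁻ x in Set.Ioi a, ENNReal.ofReal x⁻¹ = ⊤ := by
  by_contra h
  refine not_integrableOn_Ioi_inv (a := max a 0) ?_
  refine (lintegral_ofReal_ne_top_iff_integrable measurable_inv.aestronglyMeasurable ?_).1 ?_
  · filter_upwards [ae_restrict_mem measurableSet_Ioi] with x hx
    exact inv_nonneg.2 (max_lt_iff.1 hx).2.le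
  · exact ne_top_of_le_ne_top h (lintegral_mono_set (Set.Ioi_subset_Ioi (le_max_left a 0)))

lemma inv_le_sqrt_of_le_mul {c x y : ℝ} (hc : 0 < c) (hx : c⁻¹ ≤ x) (hcy : c ≤ y * x) :
    x⁻¹ ≤ √y := by
  have hx0 : 0 < x := (inv_pos.2 hc).trans_le hx
  refine le_sqrt_of_sq_le ?_
  calc x⁻¹ ^ 2 = x⁻¹ * x⁻¹ := sq _
    _ ≤ c * x⁻¹ := by gcongr; exact inv_le_of_inv_le₀ hc hx
    _ ≤ y * x * x⁻¹ := by gcongr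
    _ = y := by field_simp

lemma h8_eq (x : ℝ) :
    h8 x = 4 * exp x * (exp x ^ 2 + 3) / ((exp x - 1) * (exp x + 3) *
      (4 * exp x * x + (exp x + 3) * ((exp x - 1) * log ((exp x + 3) / (exp x - 1))))) := by
  have hlog : log ((exp x - 1) / (exp x + 3)) = -log ((exp x + 3) / (exp x - 1)) := by
    rw [← log_inv, inv_div]
  rw [h8, hlog, show exp (2 * x) = exp x ^ 2 by rw [mul_comm, exp_mul]; norm_cast, ← neg_div_neg_eq]
  ring_nf

lemma h8_mul_self_bounds {x : ℝ} (hx : 2 < x) : 1 / 4 ≤ h8 x * x ∧ h8 x * x ≤ 2 := by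
  rw [h8_eq, div_mul_eq_mul_div]
  set t := exp x
  set E := (t - 1) * log ((t + 3) / (t - 1))
  have ht : 3 < t := calc
    (3 : ℝ) = 2 + 1 := by norm_num
    _ ≤ exp 2 := add_one_le_exp 2
    _ < t := exp_lt_exp.2 hx
  have hE0 : 0 ≤ E :=
    mul_nonneg (by linarith) (log_nonneg ((one_le_div (by linarith)).2 (by linarith)))
  have hE4 : E ≤ 4 := by
    have := mul_log_div_le_sub (by linarith : 0 < t - 1) (by linarith : t - 1 ≤ t + 3)
    linarith
  have hfac : 0 < (t - 1) * (t + 3) := by nlinarith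
  have htE : 0 ≤ (t + 3) * E := mul_nonneg (by linarith) hE0
  have hden : 0 < (t - 1) * (t + 3) * (4 * t * x + (t + 3) * E) :=
    mul_pos hfac (by nlinarith)
  constructor
  · rw [le_div_iff₀ hden]
    have hquad : (t - 1) * (t + 3) ≤ 2 * (t ^ 2 + 3) := by nlinarith
    have hlin : 4 * t * x + (t + 3) * E ≤ 8 * (t * x) := by nlinarith
    calc 1 / 4 * ((t - 1) * (t + 3) * (4 * t * x + (t + 3) * E))
        ≤ 1 / 4 * (2 * (t ^ 2 + 3) * (8 * (t * x))) := by gcongr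
      _ = 4 * t * (t ^ 2 + 3) * x := by ring
  · rw [div_le_iff₀ hden]
    have hquad : t ^ 2 + 3 ≤ 2 * ((t - 1) * (t + 3)) := by nlinarith
    calc 4 * t * (t ^ 2 + 3) * x ≤ 4 * t * (2 * ((t - 1) * (t + 3))) * x := by gcongr
      _ = 2 * ((t - 1) * (t + 3) * (4 * t * x)) := by ring
      _ ≤ 2 * ((t - 1) * (t + 3) * (4 * t * x + (t + 3) * E)) := by
        gcongr; exact le_add_of_nonneg_right htE

theorem figure8_WP_complete_at_infinity :
    ∃ c c' M : ℝ, 0 < c ∧ 0 < c' ∧ 0 < M ∧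
      (∀ x, M < x → c ≤ h8 x * x ∧ h8 x * x ≤ c') ∧
      ∫⁻ x in Set.Ioi M, ENNReal.ofReal (Real.sqrt (h8 x)) = ⊤ := by
  refine ⟨1 / 4, 2, 4, by norm_num, by norm_num, by norm_num,
    fun x hx => h8_mul_self_bounds (by linarith), ?_⟩
  refine eq_top_mono (setLIntegral_mono' measurableSet_Ioi fun x hx => ?_)
    (lintegral_Ioi_ofReal_inv_eq_top 4)
  have hx4 : 4 < x := hx
  exact ENNReal.ofReal_le_ofReal (inv_le_sqrt_of_le_mul (by norm_num) (by norm_num; linarith)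
    (h8_mul_self_bounds (by linarith)).1)
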